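/- arXiv:2103.13926 — 4 statements merged into one kernel-verified Lean document; each statement's English description precedes it below -/
import Mathlib

section
/- Let H be a real inner product space, W a subspace of H, B : H × H → ℝ a symmetric bilinear form, τ > 0, n ∈ H, and t ∈ W such that ⟨t, φ⟩ + τ·B(t, φ) = −B(n, φ) for all φ ∈ W. Then ½·B(n + τ·t, n + τ·t) − ½·B(n, n) = −τ·‖t‖² − (τ²/2)·B(t, t). In particular, if B is positive semidefinite then ½·B(n + τ·t, n + τ·t) ≤ ½·B(n, n) − τ·‖t‖². -/
open scoped RealInnerProductSpace

/-- One-step energy identity for the inner loop of the discrete gradient flow: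
if `t ∈ W` solves `⟪t, φ⟫ + τ B(t, φ) = -B(n, φ)` for all `φ ∈ W`, then
`½B(n+τt, n+τt) - ½B(n,n) = -τ‖t‖² - (τ²/2)B(t,t)`; in particular, if `B` is positive
semidefinite, the update decreases the energy by at least `τ‖t‖²`. -/
theorem gradient_flow_step_energy_identity {H : Type*}
    [NormedAddCommGroup H] [InnerProductSpace ℝ H]
    (W : Submodule ℝ H) (B : H →ₗ[ℝ] H →ₗ[ℝ] ℝ) (hBsymm : ∀ x y, B x y = B y x)
    (τ : ℝ) (hτ : 0 < τ) (n t : H) (htW : t ∈ W)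
    (heq : ∀ φ ∈ W, ⟪t, φ⟫ + τ * B t φ = -(B n φ)) :
    (1 / 2) * B (n + τ • t) (n + τ • t) - (1 / 2) * B n n
        = -(τ * ‖t‖ ^ 2) - (τ ^ 2 / 2) * B t t ∧
    ((∀ v, 0 ≤ B v v) →
      (1 / 2) * B (n + τ • t) (n + τ • t) ≤ (1 / 2) * B n n - τ * ‖t‖ ^ 2) := by
  have key := heq t htW
  rw [real_inner_self_eq_norm_sq] at key
  have hexp : B (n + τ • t) (n + τ • t)
      = B n n + 2 * τ * B n t + τ ^ 2 * B t t := by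
    simp only [map_add, map_smul, LinearMap.add_apply, LinearMap.smul_apply,
      smul_eq_mul]
    rw [hBsymm t n]; ring
  have h1 : (1 / 2) * B (n + τ • t) (n + τ • t) - (1 / 2) * B n n
      = -(τ * ‖t‖ ^ 2) - (τ ^ 2 / 2) * B t t := by
    rw [hexp]; nlinarith [key]
  refine ⟨h1, fun hpos => ?_⟩
  nlinarith [hpos t, sq_nonneg τ]
end

section
/- Let H be a real inner product space, B : H × H → ℝ a symmetric bilinear form, Φ : H → ℝ, τ > 0, and a, b, g ∈ H. Assume (i) ⟨(b − a)/τ, b − a⟩ + B(b, b − a) + ⟨g, b − a⟩ = 0, and (ii) Φ(b) − Φ(a) ≤ ⟨g, b − a⟩. Then ½·B(b, b) + Φ(b) − (½·B(a, a) + Φ(a)) ≤ −(1/τ)·‖b − a‖² − ½·B(b − a, b − a). -/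
open scoped RealInnerProductSpace

/-- Abstract energy-decrease identity for the degree-of-orientation step of the
alternating-direction discrete gradient flow. -/
theorem degree_step_energy_decrease {H : Type*}
    [NormedAddCommGroup H] [InnerProductSpace ℝ H]
    (B : H →ₗ[ℝ] H →ₗ[ℝ] ℝ) (hBsymm : ∀ x y, B x y = B y x)
    (Φ : H → ℝ) (τ : ℝ) (hτ : 0 < τ) (a b g : H)
    (h1 : ⟪(1 / τ) • (b - a), b - a⟫ + B b (b - a) + ⟪g, b - a⟫ = 0)
    (h2 : Φ b - Φ a ≤ ⟪g, b - a⟫) :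
    (1 / 2) * B b b + Φ b - ((1 / 2) * B a a + Φ a)
      ≤ -(1 / τ) * ‖b - a‖ ^ 2 - (1 / 2) * B (b - a) (b - a) := by
  rw [real_inner_smul_left, real_inner_self_eq_norm_sq] at h1
  have hab := hBsymm a b
  simp only [map_sub, LinearMap.sub_apply] at h1 ⊢
  nlinarith [h1, h2]
end

section
/- Let H be a real inner product space, W a subspace of H, B : H × H → ℝ a symmetric positive semidefinite bilinear form, τ > 0, and let n, t : ℕ → H be sequences such that for every k: t(k) ∈ W, ⟨t(k), φ⟩ + τ·B(t(k), φ) = −B(n(k), φ) for all φ ∈ W, and n(k+1) = n(k) + τ·t(k). Then for every j ∈ ℕ: ½·B(n(j), n(j)) + τ·∑_{k=0}^{j−1} ‖t(k)‖² ≤ ½·B(n(0), n(0)); in particular ∑_{k=0}^{j−1} ‖t(k)‖² ≤ B(n(0), n(0))/(2τ). -/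
open scoped RealInnerProductSpace

/-- Telescoped stability bound for the inner loop of the discrete gradient flow:
the accumulated squared norms of the tangential updates are bounded by the
initial discrete energy divided by `2τ`. -/
theorem gradient_flow_telescoped_stability {H : Type*}
    [NormedAddCommGroup H] [InnerProductSpace ℝ H]
    (W : Submodule ℝ H) (B : H →ₗ[ℝ] H →ₗ[ℝ] ℝ)
    (hBsymm : ∀ x y, B x y = B y x) (hBpos : ∀ v, 0 ≤ B v v)
    (τ : ℝ) (hτ : 0 < τ) (n t : ℕ → H)
    (htW : ∀ k, t k ∈ W)
    (heq : ∀ k, ∀ φ ∈ W, ⟪t k, φ⟫ + τ * B (t k) φ = -(B (n k) φ))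
    (hrec : ∀ k, n (k + 1) = n k + τ • t k) :
    ∀ j : ℕ,
      (1 / 2) * B (n j) (n j) + τ * ∑ k ∈ Finset.range j, ‖t k‖ ^ 2
          ≤ (1 / 2) * B (n 0) (n 0) ∧
      ∑ k ∈ Finset.range j, ‖t k‖ ^ 2 ≤ B (n 0) (n 0) / (2 * τ) := by
  have hstep : ∀ k, (1 / 2) * B (n (k+1)) (n (k+1)) + τ * ‖t k‖ ^ 2
      ≤ (1 / 2) * B (n k) (n k) := by
    intro k
    have hφ := heq k (t k) (htW k)
    have hinner : (⟪t k, t k⟫ : ℝ) = ‖t k‖ ^ 2 := real_inner_self_eq_norm_sq _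
    have hBn : B (n k) (t k) = -(‖t k‖ ^ 2 + τ * B (t k) (t k)) := by
      rw [hinner] at hφ; linarith
    have hexp : B (n (k+1)) (n (k+1)) =
        B (n k) (n k) + 2 * τ * B (n k) (t k) + τ^2 * B (t k) (t k) := by
      rw [hrec k]
      simp [map_add, map_smul, hBsymm (t k) (n k)]
      ring
    have hpos := hBpos (t k)
    rw [hexp, hBn]
    nlinarith [sq_nonneg τ]
  have main : ∀ j : ℕ, (1 / 2) * B (n j) (n j) + τ * ∑ k ∈ Finset.range j, ‖t k‖ ^ 2
      ≤ (1 / 2) * B (n 0) (n 0) := by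
    intro j
    induction j with
    | zero => simp
    | succ j ih =>
      rw [Finset.sum_range_succ]
      have := hstep j
      linarith
  intro j
  refine ⟨main j, ?_⟩
  have h := main j
  have hpos := hBpos (n j)
  rw [le_div_iff₀ (by positivity)]
  nlinarith
end

section
/- Let H be a real inner product space, W a subspace of H, B : H × H → ℝ a symmetric positive semidefinite bilinear form, τ > 0, and let n, t : ℕ → H be sequences such that for every k: t(k) ∈ W, ⟨t(k), φ⟩ + τ·B(t(k), φ) = −B(n(k), φ) for all φ ∈ W, ⟨n(k), t(k)⟩ = 0, and n(k+1) = n(k) + τ·t(k). Then for every j ∈ ℕ: 0 ≤ ‖n(j)‖² − ‖n(0)‖² ≤ (τ/2)·B(n(0), n(0)). -/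
open scoped RealInnerProductSpace

/-- Control of the unit-length constraint violation in the projection-free scheme:
combining the Pythagorean identity with the telescoped stability bound shows that
`0 ≤ ‖n(j)‖² - ‖n(0)‖² ≤ (τ/2) B(n(0), n(0))`, uniformly in the number of iterations. -/
theorem unit_length_violation_control {H : Type*}
    [NormedAddCommGroup H] [InnerProductSpace ℝ H]
    (W : Submodule ℝ H) (B : H →ₗ[ℝ] H →ₗ[ℝ] ℝ)
    (hBsymm : ∀ x y, B x y = B y x) (hBpos : ∀ v, 0 ≤ B v v)
    (τ : ℝ) (hτ : 0 < τ) (n t : ℕ → H)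
    (htW : ∀ k, t k ∈ W)
    (heq : ∀ k, ∀ φ ∈ W, ⟪t k, φ⟫ + τ * B (t k) φ = -(B (n k) φ))
    (horth : ∀ k, ⟪n k, t k⟫ = 0)
    (hrec : ∀ k, n (k + 1) = n k + τ • t k) :
    ∀ j : ℕ, 0 ≤ ‖n j‖ ^ 2 - ‖n 0‖ ^ 2 ∧
      ‖n j‖ ^ 2 - ‖n 0‖ ^ 2 ≤ (τ / 2) * B (n 0) (n 0) := by
  -- strengthened invariant
  have key : ∀ j : ℕ, 0 ≤ ‖n j‖ ^ 2 - ‖n 0‖ ^ 2 ∧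
      ‖n j‖ ^ 2 - ‖n 0‖ ^ 2 ≤ (τ / 2) * (B (n 0) (n 0) - B (n j) (n j)) := by
    intro j
    induction j with
    | zero => simp
    | succ k ih =>
      obtain ⟨ih1, ih2⟩ := ih
      -- Pythagorean step
      have hnorm : ‖n (k + 1)‖ ^ 2 = ‖n k‖ ^ 2 + τ ^ 2 * ‖t k‖ ^ 2 := by
        rw [hrec k, ← real_inner_self_eq_norm_sq, ← real_inner_self_eq_norm_sq,
          ← real_inner_self_eq_norm_sq]
        simp only [inner_add_add_self, inner_smul_left, inner_smul_right,
          starRingEnd_apply, star_trivial]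
        have h0 : ⟪t k, n k⟫ = (0:ℝ) := by rw [real_inner_comm]; exact horth k
        rw [h0]; ring_nf; rw [horth k]; ring
      -- energy step
      have htest := heq k (t k) (htW k)
      have hB : B (n (k + 1)) (n (k + 1)) =
          B (n k) (n k) - 2 * τ * ‖t k‖ ^ 2 - τ ^ 2 * B (t k) (t k) := by
        rw [hrec k]
        simp only [map_add, map_smul, LinearMap.add_apply, LinearMap.smul_apply, smul_eq_mul]
        rw [hBsymm (t k) (n k)]
        have hBnt : B (n k) (t k) = -(‖t k‖ ^ 2 + τ * B (t k) (t k)) := by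
          have := htest
          rw [real_inner_self_eq_norm_sq] at this
          linarith
        rw [hBnt]
        rw [← real_inner_self_eq_norm_sq] at *
        ring
      constructor
      · have := sq_nonneg τ; have := sq_nonneg ‖t k‖
        nlinarith [mul_nonneg (sq_nonneg τ) (sq_nonneg ‖t k‖)]
      · have hBt : 0 ≤ B (t k) (t k) := hBpos (t k)
        have h1 : τ ^ 2 * ‖t k‖ ^ 2 ≤ (τ / 2) * (2 * τ * ‖t k‖ ^ 2 + τ ^ 2 * B (t k) (t k)) := by
          nlinarith [mul_nonneg (mul_nonneg hτ.le (mul_nonneg hτ.le hτ.le)) hBt]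
        rw [hnorm, hB]
        linarith
  intro j
  obtain ⟨h1, h2⟩ := key j
  refine ⟨h1, h2.trans ?_⟩
  have := hBpos (n j)
  nlinarith
end
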